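/- arXiv:2310.04154 — 2 statements merged into one kernel-verified Lean document; each statement's English description precedes it below -/
import Mathlib

section
/- The group presented by generators λ, γ₁, γ₂ with relations γ₁² = e, γ₂² = e, and γ₁γ₂ = γ₂γ₁ is isomorphic to the free product Z * (Z/2Z × Z/2Z). -/
/-- Generators: 0 = λ (= λ₁₂), 1 = γ₁, 2 = γ₂. -/
def tvp2Rels : Set (FreeGroup (Fin 3)) :=
  {FreeGroup.of 1 ^ 2, FreeGroup.of 2 ^ 2,
   FreeGroup.of 1 * FreeGroup.of 2 * (FreeGroup.of 2 * FreeGroup.of 1)⁻¹}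

/-!
Both groups are generated by three elements subject to the same relations. Sending `λ, γ₁, γ₂`
to the generators of `ℤ` and of the two `ℤ/2` factors respects the relations of `tvp2Rels`; in
the other direction, `γ₁` and `γ₂` are commuting involutions, so they define a homomorphism out
of `ℤ/2 × ℤ/2`, which together with `λ` gives one out of the free product. The two composites
fix the generators.
-/

open Multiplicative

theorem MonoidHom.prod_ext {M N P : Type*} [Monoid M] [Monoid N] [Monoid P]
    {f g : M × N →* P} (h₁ : f.comp (inl M N) = g.comp (inl M N))
    (h₂ : f.comp (inr M N) = g.comp (inr M N)) : f = g := by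
  rw [← noncommCoprod_unique f, ← noncommCoprod_unique g]
  congr

section ZModPowers

variable {n : ℕ} {G : Type*} [Group G]

def zmodPowersHom (g : G) (hg : g ^ n = 1) : Multiplicative (ZMod n) →* G :=
  AddMonoidHom.toMultiplicativeLeft <| ZMod.lift n
    ⟨zmultiplesHom (Additive G) (Additive.ofMul g), by
      simpa [← ofMul_pow] using congrArg Additive.ofMul hg⟩

@[simp]
theorem zmodPowersHom_ofAdd_intCast (g : G) (hg : g ^ n = 1) (k : ℤ) :
    zmodPowersHom g hg (ofAdd (k : ZMod n)) = g ^ k := by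
  simp [zmodPowersHom]

@[simp]
theorem zmodPowersHom_ofAdd_one (g : G) (hg : g ^ n = 1) :
    zmodPowersHom g hg (ofAdd 1) = g := by
  simpa using zmodPowersHom_ofAdd_intCast g hg 1

@[simp]
theorem ofAdd_one_pow_self : (ofAdd 1 : Multiplicative (ZMod n)) ^ n = 1 := by
  rw [← ofAdd_nsmul, nsmul_one, ZMod.natCast_self, ofAdd_zero]

theorem MonoidHom.ext_mzmod {M : Type*} [Monoid M] {f g : Multiplicative (ZMod n) →* M}
    (h : f (ofAdd 1) = g (ofAdd 1)) : f = g := by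
  have hcast : Function.Surjective (Int.castAddHom (ZMod n)).toMultiplicative :=
    ZMod.intCast_surjective
  exact (MonoidHom.cancel_right hcast).1 (MonoidHom.ext_mint (by simpa using h))

theorem Commute.zmodPowersHom_apply {m : ℕ} {a b : G} (hab : Commute a b) (ha : a ^ n = 1)
    (hb : b ^ m = 1) (x : Multiplicative (ZMod n)) (y : Multiplicative (ZMod m)) :
    Commute (zmodPowersHom a ha x) (zmodPowersHom b hb y) := by
  obtain ⟨k, hk⟩ := ZMod.intCast_surjective x.toAdd
  obtain ⟨l, hl⟩ := ZMod.intCast_surjective y.toAdd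
  rw [← ofAdd_toAdd x, ← ofAdd_toAdd y, ← hk, ← hl, zmodPowersHom_ofAdd_intCast,
    zmodPowersHom_ofAdd_intCast]
  exact hab.zpow_zpow k l

end ZModPowers

theorem tvp2Rels_lift_eq_one_iff {G : Type*} [Group G] (f : Fin 3 → G) :
    (∀ r ∈ tvp2Rels, FreeGroup.lift f r = 1) ↔
      f 1 ^ 2 = 1 ∧ f 2 ^ 2 = 1 ∧ Commute (f 1) (f 2) := by
  simp only [tvp2Rels, Set.mem_insert_iff, Set.mem_singleton_iff, forall_eq_or_imp, forall_eq,
    map_pow, map_mul_inv]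
  simp only [mul_inv_eq_one, map_mul, FreeGroup.lift_apply_of, commute_iff_eq]

theorem tvp2_relations :
    (PresentedGroup.of 1 : PresentedGroup tvp2Rels) ^ 2 = 1 ∧
      (PresentedGroup.of 2 : PresentedGroup tvp2Rels) ^ 2 = 1 ∧
      Commute (PresentedGroup.of 1 : PresentedGroup tvp2Rels) (PresentedGroup.of 2) :=
  (tvp2Rels_lift_eq_one_iff _).1 fun _ hr => by
    rw [show FreeGroup.lift .of = PresentedGroup.mk tvp2Rels from
      FreeGroup.ext_hom _ _ fun _ ↦ rfl]
    exact PresentedGroup.one_of_mem hr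

local notation "V₄" => Multiplicative (ZMod 2) × Multiplicative (ZMod 2)

def tvp2ToCoprod : PresentedGroup tvp2Rels →* Monoid.Coprod (Multiplicative ℤ) V₄ :=
  PresentedGroup.toGroup (f := ![.inl (ofAdd 1), .inr (ofAdd 1, 1), .inr (1, ofAdd 1)]) <|
    (tvp2Rels_lift_eq_one_iff _).2
      ⟨by simp [← map_pow, ← Prod.one_eq_mk], by simp [← map_pow, ← Prod.one_eq_mk],
        (Commute.all _ _).map Monoid.Coprod.inr⟩

def coprodToTVP2 : Monoid.Coprod (Multiplicative ℤ) V₄ →* PresentedGroup tvp2Rels :=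
  Monoid.Coprod.lift (zpowersHom _ (.of 0)) <|
    (zmodPowersHom _ tvp2_relations.1).noncommCoprod (zmodPowersHom _ tvp2_relations.2.1)
      (tvp2_relations.2.2.zmodPowersHom_apply _ _)

/-- ⟨λ, γ₁, γ₂ | γ₁² = γ₂² = e, γ₁γ₂ = γ₂γ₁⟩ ≅ ℤ * (ℤ/2 × ℤ/2). -/
theorem stmt1 :
    Nonempty (PresentedGroup tvp2Rels ≃*
      Monoid.Coprod (Multiplicative ℤ)
        (Multiplicative (ZMod 2) × Multiplicative (ZMod 2))) := by
  refine ⟨MonoidHom.toMulEquiv tvp2ToCoprod coprodToTVP2 ?_ ?_⟩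
  · refine PresentedGroup.ext fun i => ?_
    fin_cases i <;> simp [tvp2ToCoprod, coprodToTVP2, PresentedGroup.toGroup.of]
  · refine Monoid.Coprod.hom_ext (MonoidHom.ext_mint ?_) (MonoidHom.prod_ext ?_ ?_)
    · simp [tvp2ToCoprod, coprodToTVP2, PresentedGroup.toGroup.of]
    all_goals
      refine MonoidHom.ext_mzmod ?_
      simp [tvp2ToCoprod, coprodToTVP2, PresentedGroup.toGroup.of]
end

section
/- The map sending λ_{ij} ↦ λ_{ij}, λ_{ij}^{(i)} ↦ e, λ_{ij}^{(j)} ↦ e, λ_{ij}^{(ij)} ↦ λ_{ji} (for 1 ≤ i < j ≤ n) extends to a well-defined group homomorphism from PLₙ onto the virtual pure braid group VPₙ, where VPₙ is presented by generators λ_{ij} (1 ≤ i ≠ j ≤ n) with relations λ_{ij}λ_{kl} = λ_{kl}λ_{ij} (disjoint index pairs) and λ_{ki}λ_{kj}λ_{ij} = λ_{ij}λ_{kj}λ_{ki} (distinct indices). -/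
/-- Generators of PLₙ: for 1 ≤ i < j ≤ n, the four generators
λ_{ij}^{(0)}, λ_{ij}^{(i)}, λ_{ij}^{(j)}, λ_{ij}^{(ij)}, encoded by a pair
(i,j) with i < j and a decoration in Fin 4 (0 = none, 1 = i, 2 = j, 3 = ij). -/
abbrev PLGen (n : ℕ) := {p : Fin n × Fin n // p.1 < p.2} × Fin 4

def pl {n : ℕ} {i j : Fin n} (h : i < j) (d : Fin 4) : FreeGroup (PLGen n) :=
  FreeGroup.of (⟨(i, j), h⟩, d)

/-- Decoration triples (for λ_{ij}, λ_{ik}, λ_{jk}) occurring in the relations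
λ_{ij}^a λ_{ik}^b λ_{jk}^c = λ_{jk}^c λ_{ik}^b λ_{ij}^a of Theorem 3.7. -/
def blockA : Set (Fin 4 × Fin 4 × Fin 4) :=
  {(0,0,0), (1,1,0), (2,0,1), (0,2,2), (3,1,2), (2,2,3), (1,3,2), (3,3,3)}

/-- Decoration triples (for λ_{ij}, λ_{jk}, λ_{ik}) in the relations
λ_{ij}^a λ_{jk}^b λ_{ik}^c = λ_{ik}^c λ_{jk}^b λ_{ij}^a. -/
def blockB : Set (Fin 4 × Fin 4 × Fin 4) :=
  {(3,0,0), (2,0,1), (1,1,0), (0,1,1), (3,2,2), (1,3,2), (2,2,3), (0,3,3)}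

/-- Decoration triples (for λ_{ik}, λ_{ij}, λ_{jk}) in the relations
λ_{ik}^a λ_{ij}^b λ_{jk}^c = λ_{jk}^c λ_{ij}^b λ_{ik}^a. -/
def blockC : Set (Fin 4 × Fin 4 × Fin 4) :=
  {(0,0,3), (1,1,3), (0,2,2), (2,0,1), (1,3,2), (2,2,3), (3,1,2), (3,3,0)}

/-- Defining relations of PLₙ (Theorem 3.7). -/
def plRels (n : ℕ) : Set (FreeGroup (PLGen n)) :=
  {r |
    (∃ (i j k l : Fin n) (hij : i < j) (hkl : k < l) (a b : Fin 4),
      i ≠ k ∧ i ≠ l ∧ j ≠ k ∧ j ≠ l ∧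
      r = pl hij a * pl hkl b * (pl hkl b * pl hij a)⁻¹) ∨
    (∃ (i j k : Fin n) (hij : i < j) (hjk : j < k) (hik : i < k) (a b c : Fin 4),
      (a, b, c) ∈ blockA ∧
      r = pl hij a * pl hik b * pl hjk c * (pl hjk c * pl hik b * pl hij a)⁻¹) ∨
    (∃ (i j k : Fin n) (hij : i < j) (hjk : j < k) (hik : i < k) (a b c : Fin 4),
      (a, b, c) ∈ blockB ∧
      r = pl hij a * pl hjk b * pl hik c * (pl hik c * pl hjk b * pl hij a)⁻¹) ∨
    (∃ (i j k : Fin n) (hij : i < j) (hjk : j < k) (hik : i < k) (a b c : Fin 4),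
      (a, b, c) ∈ blockC ∧
      r = pl hik a * pl hij b * pl hjk c * (pl hjk c * pl hij b * pl hik a)⁻¹)}

/-- Generators of the virtual pure braid group VPₙ: λ_{ij} for i ≠ j. -/
abbrev VPGen (n : ℕ) := {p : Fin n × Fin n // p.1 ≠ p.2}

def vl {n : ℕ} {i j : Fin n} (h : i ≠ j) : FreeGroup (VPGen n) :=
  FreeGroup.of ⟨(i, j), h⟩

/-- Defining relations of VPₙ. -/
def vpRels (n : ℕ) : Set (FreeGroup (VPGen n)) :=
  {r |
    (∃ (i j k l : Fin n) (hij : i ≠ j) (hkl : k ≠ l),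
      i ≠ k ∧ i ≠ l ∧ j ≠ k ∧ j ≠ l ∧
      r = vl hij * vl hkl * (vl hkl * vl hij)⁻¹) ∨
    (∃ (i j k : Fin n) (hki : k ≠ i) (hkj : k ≠ j) (hij : i ≠ j),
      r = vl hki * vl hkj * vl hij * (vl hij * vl hkj * vl hki)⁻¹)}


section Helpers

variable {n : ℕ}

/-- The image of each generator of PLₙ in VPₙ. -/
def fgen (n : ℕ) : PLGen n → PresentedGroup (vpRels n) :=
  fun x => ![PresentedGroup.of ⟨(x.1.1.1, x.1.1.2), x.1.2.ne⟩, 1, 1,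
             PresentedGroup.of ⟨(x.1.1.2, x.1.1.1), x.1.2.ne'⟩] x.2

lemma lift_pl {i j : Fin n} (h : i < j) (d : Fin 4) :
    FreeGroup.lift (fgen n) (pl h d) =
      ![PresentedGroup.of ⟨(i, j), h.ne⟩, 1, 1, PresentedGroup.of ⟨(j, i), h.ne'⟩] d := by
  simp [pl, fgen, FreeGroup.lift_apply_of]

lemma vrel_one {r : FreeGroup (VPGen n)} (h : r ∈ vpRels n) :
    PresentedGroup.mk (vpRels n) r = 1 :=
  (QuotientGroup.eq_one_iff _).2 (Subgroup.subset_normalClosure h)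

lemma mk_vl {i j : Fin n} (h : i ≠ j) :
    PresentedGroup.mk (vpRels n) (vl h) = PresentedGroup.of ⟨(i, j), h⟩ := rfl

lemma vcomm {i j k l : Fin n} (hij : i ≠ j) (hkl : k ≠ l) (h1 : i ≠ k) (h2 : i ≠ l)
    (h3 : j ≠ k) (h4 : j ≠ l) :
    (PresentedGroup.of ⟨(i, j), hij⟩ : PresentedGroup (vpRels n)) *
        PresentedGroup.of ⟨(k, l), hkl⟩ =
      PresentedGroup.of ⟨(k, l), hkl⟩ * PresentedGroup.of ⟨(i, j), hij⟩ := by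
  have := vrel_one (n := n) (Or.inl ⟨i, j, k, l, hij, hkl, h1, h2, h3, h4, rfl⟩)
  simp only [map_mul, map_inv, mk_vl, mul_inv_eq_one] at this
  exact this

lemma vbraid {k i j : Fin n} (hki : k ≠ i) (hkj : k ≠ j) (hij : i ≠ j) :
    (PresentedGroup.of ⟨(k, i), hki⟩ : PresentedGroup (vpRels n)) *
        PresentedGroup.of ⟨(k, j), hkj⟩ * PresentedGroup.of ⟨(i, j), hij⟩ =
      PresentedGroup.of ⟨(i, j), hij⟩ * PresentedGroup.of ⟨(k, j), hkj⟩ *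
        PresentedGroup.of ⟨(k, i), hki⟩ := by
  have := vrel_one (n := n) (Or.inr ⟨i, j, k, hki, hkj, hij, rfl⟩)
  simp only [map_mul, map_inv, mk_vl, mul_inv_eq_one] at this
  exact this

end Helpers

/-- The map λ_{ij}^{(0)} ↦ λ_{ij}, λ_{ij}^{(i)} ↦ e, λ_{ij}^{(j)} ↦ e,
λ_{ij}^{(ij)} ↦ λ_{ji} extends to a well-defined homomorphism of PLₙ onto VPₙ. -/
theorem stmt16 (n : ℕ) :
    ∃ φ : PresentedGroup (plRels n) →* PresentedGroup (vpRels n),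
      Function.Surjective φ ∧
      ∀ (i j : Fin n) (h : i < j),
        φ (PresentedGroup.of (⟨(i, j), h⟩, (0 : Fin 4))) =
          PresentedGroup.of ⟨(i, j), h.ne⟩ ∧
        φ (PresentedGroup.of (⟨(i, j), h⟩, (1 : Fin 4))) = 1 ∧
        φ (PresentedGroup.of (⟨(i, j), h⟩, (2 : Fin 4))) = 1 ∧
        φ (PresentedGroup.of (⟨(i, j), h⟩, (3 : Fin 4))) =
          PresentedGroup.of ⟨(j, i), h.ne'⟩ := by
  have key : ∀ r ∈ plRels n, FreeGroup.lift (fgen n) r = 1 := by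
    rintro r (⟨i, j, k, l, hij, hkl, a, b, h1, h2, h3, h4, rfl⟩ |
      ⟨i, j, k, hij, hjk, hik, a, b, c, hm, rfl⟩ |
      ⟨i, j, k, hij, hjk, hik, a, b, c, hm, rfl⟩ |
      ⟨i, j, k, hij, hjk, hik, a, b, c, hm, rfl⟩)
    · simp only [map_mul, map_inv, lift_pl, mul_inv_eq_one]
      fin_cases a <;> fin_cases b <;>
        simp only [Fin.isValue, Matrix.cons_val_zero, Matrix.cons_val_one, Matrix.head_cons,
          Matrix.cons_val_two, Matrix.tail_cons, Matrix.cons_val_three, one_mul, mul_one] <;>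
        first
          | rfl
          | exact vcomm hij.ne hkl.ne h1 h2 h3 h4
          | exact vcomm hij.ne hkl.ne' h2 h1 h4 h3
          | exact vcomm hij.ne' hkl.ne h3 h4 h1 h2
          | exact vcomm hij.ne' hkl.ne' h4 h3 h2 h1
    · simp only [blockA, Set.mem_insert_iff, Set.mem_singleton_iff, Prod.mk.injEq] at hm
      obtain ⟨rfl, rfl, rfl⟩ | ⟨rfl, rfl, rfl⟩ | ⟨rfl, rfl, rfl⟩ | ⟨rfl, rfl, rfl⟩ |
        ⟨rfl, rfl, rfl⟩ | ⟨rfl, rfl, rfl⟩ | ⟨rfl, rfl, rfl⟩ | ⟨rfl, rfl, rfl⟩ := hm <;>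
        simp only [map_mul, map_inv, lift_pl, mul_inv_eq_one, Fin.isValue,
          Matrix.cons_val_zero, Matrix.cons_val_one, Matrix.head_cons,
          Matrix.cons_val_two, Matrix.tail_cons, Matrix.cons_val_three, one_mul, mul_one]
      · exact vbraid hij.ne hik.ne hjk.ne
      · exact (vbraid hjk.ne' hik.ne' hij.ne').symm
    · simp only [blockB, Set.mem_insert_iff, Set.mem_singleton_iff, Prod.mk.injEq] at hm
      obtain ⟨rfl, rfl, rfl⟩ | ⟨rfl, rfl, rfl⟩ | ⟨rfl, rfl, rfl⟩ | ⟨rfl, rfl, rfl⟩ |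
        ⟨rfl, rfl, rfl⟩ | ⟨rfl, rfl, rfl⟩ | ⟨rfl, rfl, rfl⟩ | ⟨rfl, rfl, rfl⟩ := hm <;>
        simp only [map_mul, map_inv, lift_pl, mul_inv_eq_one, Fin.isValue,
          Matrix.cons_val_zero, Matrix.cons_val_one, Matrix.head_cons,
          Matrix.cons_val_two, Matrix.tail_cons, Matrix.cons_val_three, one_mul, mul_one]
      · exact vbraid hij.ne' hjk.ne hik.ne
      · exact (vbraid hik.ne' hjk.ne' hij.ne).symm
    · simp only [blockC, Set.mem_insert_iff, Set.mem_singleton_iff, Prod.mk.injEq] at hm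
      obtain ⟨rfl, rfl, rfl⟩ | ⟨rfl, rfl, rfl⟩ | ⟨rfl, rfl, rfl⟩ | ⟨rfl, rfl, rfl⟩ |
        ⟨rfl, rfl, rfl⟩ | ⟨rfl, rfl, rfl⟩ | ⟨rfl, rfl, rfl⟩ | ⟨rfl, rfl, rfl⟩ := hm <;>
        simp only [map_mul, map_inv, lift_pl, mul_inv_eq_one, Fin.isValue,
          Matrix.cons_val_zero, Matrix.cons_val_one, Matrix.head_cons,
          Matrix.cons_val_two, Matrix.tail_cons, Matrix.cons_val_three, one_mul, mul_one]
      · exact vbraid hik.ne hij.ne hjk.ne'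
      · exact (vbraid hjk.ne hij.ne' hik.ne').symm
  refine ⟨PresentedGroup.toGroup key, ?_, ?_⟩
  · rw [← MonoidHom.range_eq_top]
    rw [eq_top_iff, ← PresentedGroup.closure_range_of (vpRels n)]
    rw [Subgroup.closure_le]
    rintro x ⟨⟨⟨i, j⟩, hij⟩, rfl⟩
    rcases hij.lt_or_gt with h | h
    · exact ⟨PresentedGroup.of (⟨(i, j), h⟩, (0 : Fin 4)), by
        rw [PresentedGroup.toGroup.of]; rfl⟩
    · exact ⟨PresentedGroup.of (⟨(j, i), h⟩, (3 : Fin 4)), by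
        rw [PresentedGroup.toGroup.of]; rfl⟩
  · intro i j h
    refine ⟨?_, ?_, ?_, ?_⟩ <;> rw [PresentedGroup.toGroup.of] <;> rfl
end
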